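/- Let a₁, …, a_m ∈ ℝ³ be constant unit vectors, k₁, …, k_m > 0, k_ω > 0, k_V ≥ 0, let ω : ℝ → ℝ³, h : ℝ → ℝ³ and b₁, …, b_m : ℝ → ℝ³ be differentiable with ‖b_j(t)‖ = 1 for all t, and suppose the forced closed-loop dynamics b_j′(t) = b_j(t) × ω(t) and ω′(t) = −k_ω ω(t) − e(t) + h(t) hold, where e(t) = Σ_{j=1}^m k_j (a_j × b_j(t)). Define V(t) = Σ_{j=1}^m k_j (1 + a_j · b_j(t)) + ½‖ω(t)‖² + k_V (e(t) · ω(t)). Then V is differentiable and for all t, V′(t) ≤ −(k_ω − k_V Σ_{j=1}^m k_j) ‖ω(t)‖² − k_V ‖e(t)‖² + k_V k_ω ‖e(t)‖ ‖ω(t)‖ + (‖ω(t)‖ + k_V ‖e(t)‖) ‖h(t)‖. -/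

import Mathlib

open Matrix

/-- The cross product on `ℝ³` with the Euclidean structure. -/
noncomputable def cross3 (x y : EuclideanSpace ℝ (Fin 3)) : EuclideanSpace ℝ (Fin 3) :=
  (WithLp.equiv 2 (Fin 3 → ℝ)).symm
    (crossProduct ((WithLp.equiv 2 (Fin 3 → ℝ)) x) ((WithLp.equiv 2 (Fin 3 → ℝ)) y))

/-!
Along the flow, the potential `∑ k_j (1 + ⟪a_j, b_j⟫)` has derivative `∑ k_j ⟪a_j, b_j × ω⟫ = ⟪e, ω⟫`
by the triple product identity, and this cancels the `-e` in `ω′` inside `d/dt ½‖ω‖²`. What remains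
of `V′` is bounded term by term with Cauchy–Schwarz; the only new ingredient is
`⟪e′, ω⟫ = ∑ k_j ⟪a_j × (b_j × ω), ω⟫ ≤ (∑ k_j) ‖ω‖²`, since `‖x × y‖ ≤ ‖x‖ ‖y‖` and the `a_j`, `b_j`
are unit vectors.
-/

local notation "ℝ³" => EuclideanSpace ℝ (Fin 3)

open scoped RealInnerProductSpace

lemma cross3_apply (x y : ℝ³) (i : Fin 3) :
    cross3 x y i = ![x 1 * y 2 - x 2 * y 1, x 2 * y 0 - x 0 * y 2, x 0 * y 1 - x 1 * y 0] i := by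
  simp [cross3, crossProduct]

lemma inner_cross3_right (x y z : ℝ³) : ⟪x, cross3 y z⟫ = ⟪cross3 x y, z⟫ := by
  simp only [PiLp.inner_apply, cross3_apply, RCLike.inner_apply, Real.ringHom_apply,
    Fin.sum_univ_three, cons_val_zero, cons_val_one, cons_val]
  ring

lemma norm_cross3_le (x y : ℝ³) : ‖cross3 x y‖ ≤ ‖x‖ * ‖y‖ := by
  refine le_of_sq_le_sq ?_ (by positivity)
  simp only [mul_pow, EuclideanSpace.norm_sq_eq, Real.norm_eq_abs, sq_abs, Fin.sum_univ_three,
    cross3_apply, cons_val_zero, cons_val_one, cons_val]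
  -- Lagrange's identity `‖x × y‖² + ⟪x, y⟫² = ‖x‖² ‖y‖²`
  nlinarith [sq_nonneg (x 0 * y 0 + x 1 * y 1 + x 2 * y 2)]

lemma inner_cross3_cross3_le (a b w : ℝ³) : ⟪cross3 a (cross3 b w), w⟫ ≤ ‖a‖ * ‖b‖ * ‖w‖ ^ 2 :=
  calc ⟪cross3 a (cross3 b w), w⟫ ≤ ‖cross3 a (cross3 b w)‖ * ‖w‖ := real_inner_le_norm _ _
    _ ≤ ‖a‖ * (‖b‖ * ‖w‖) * ‖w‖ := by
      gcongr
      exact (norm_cross3_le _ _).trans (by gcongr; exact norm_cross3_le _ _)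
    _ = ‖a‖ * ‖b‖ * ‖w‖ ^ 2 := by ring

noncomputable def cross3CLM (c : ℝ³) : ℝ³ →L[ℝ] ℝ³ :=
  LinearMap.toContinuousLinearMap
    ((WithLp.linearEquiv 2 ℝ (Fin 3 → ℝ)).symm.toLinearMap ∘ₗ crossProduct (WithLp.equiv 2 _ c)
      ∘ₗ (WithLp.linearEquiv 2 ℝ (Fin 3 → ℝ)).toLinearMap)

lemma HasDerivAt.const_cross3 {f : ℝ → ℝ³} {f' : ℝ³} {t : ℝ} (c : ℝ³) (hf : HasDerivAt f f' t) :
    HasDerivAt (fun s => cross3 c (f s)) (cross3 c f') t :=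
  (cross3CLM c).hasFDerivAt.comp_hasDerivAt t hf

section WeightedSums

variable {ι : Type*} [Fintype ι] (k : ι → ℝ) (a : ι → ℝ³)

lemma sum_mul_inner_cross3 (b : ι → ℝ³) (w : ℝ³) :
    ∑ j, k j * ⟪a j, cross3 (b j) w⟫ = ⟪∑ j, k j • cross3 (a j) (b j), w⟫ := by
  simp only [sum_inner, real_inner_smul_left, inner_cross3_right]

lemma inner_sum_cross3_cross3_le {k : ι → ℝ} (hk : ∀ j, 0 ≤ k j) {a b : ι → ℝ³}
    (ha : ∀ j, ‖a j‖ ≤ 1) (hb : ∀ j, ‖b j‖ ≤ 1) (w : ℝ³) :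
    ⟪∑ j, k j • cross3 (a j) (cross3 (b j) w), w⟫ ≤ (∑ j, k j) * ‖w‖ ^ 2 := by
  simp only [sum_inner, real_inner_smul_left, Finset.sum_mul]
  gcongr with j
  · exact hk j
  calc ⟪cross3 (a j) (cross3 (b j) w), w⟫ ≤ ‖a j‖ * ‖b j‖ * ‖w‖ ^ 2 := inner_cross3_cross3_le ..
    _ ≤ ‖w‖ ^ 2 := by
      have := mul_le_one₀ (ha j) (norm_nonneg _) (hb j)
      nlinarith [sq_nonneg ‖w‖]

variable {b : ι → ℝ → ℝ³} {b' : ι → ℝ³} {t : ℝ}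

lemma hasDerivAt_sum_smul_const_cross3 (hb : ∀ j, HasDerivAt (b j) (b' j) t) :
    HasDerivAt (fun s => ∑ j, k j • cross3 (a j) (b j s)) (∑ j, k j • cross3 (a j) (b' j)) t :=
  .fun_sum fun j _ => ((hb j).const_cross3 (a j)).const_smul (k j)

lemma hasDerivAt_sum_mul_one_add_inner (hb : ∀ j, HasDerivAt (b j) (b' j) t) :
    HasDerivAt (fun s => ∑ j, k j * (1 + ⟪a j, b j s⟫)) (∑ j, k j * ⟪a j, b' j⟫) t := by
  refine .fun_sum fun j _ => ?_
  simpa using (((hasDerivAt_const t (a j)).inner ℝ (hb j)).const_add 1).const_mul (k j)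

end WeightedSums

lemma inner_dissipation_le {F : Type*} [NormedAddCommGroup F] [InnerProductSpace ℝ F]
    {kω kV K : ℝ} (hkω : 0 ≤ kω) (hkV : 0 ≤ kV) {ω e h E' : F} (hE' : ⟪E', ω⟫ ≤ K * ‖ω‖ ^ 2) :
    ⟪e, ω⟫ + ⟪ω, -(kω • ω) - e + h⟫ + kV * (⟪e, -(kω • ω) - e + h⟫ + ⟪E', ω⟫)
      ≤ -(kω - kV * K) * ‖ω‖ ^ 2 - kV * ‖e‖ ^ 2 + kV * kω * ‖e‖ * ‖ω‖
        + (‖ω‖ + kV * ‖e‖) * ‖h‖ := by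
  simp only [inner_add_right, inner_sub_right, inner_neg_right, real_inner_smul_right,
    real_inner_self_eq_norm_sq, real_inner_comm e ω]
  have heω : -⟪e, ω⟫ ≤ ‖e‖ * ‖ω‖ := by simpa using real_inner_le_norm (-e) ω
  linarith [real_inner_le_norm ω h, mul_le_mul_of_nonneg_left heω (mul_nonneg hkV hkω),
    mul_le_mul_of_nonneg_left (real_inner_le_norm e h) hkV, mul_le_mul_of_nonneg_left hE' hkV]

/-- Dissipation inequality for the forced closed-loop attitude dynamics
`b_j′ = b_j × ω`, `ω′ = −k_ω ω − e + h`, with `e = ∑ j, k j (a j × b j)` and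
`V = ∑ j, k j (1 + a j · b j) + ½‖ω‖² + k_V (e · ω)`. -/
theorem lyapunov_dissipation_forced
    (m : ℕ) (a : Fin m → EuclideanSpace ℝ (Fin 3)) (ha : ∀ j, ‖a j‖ = 1)
    (k : Fin m → ℝ) (hk : ∀ j, 0 < k j)
    (kω kV : ℝ) (hkω : 0 < kω) (hkV : 0 ≤ kV)
    (ω h : ℝ → EuclideanSpace ℝ (Fin 3))
    (b : Fin m → ℝ → EuclideanSpace ℝ (Fin 3))
    (hbunit : ∀ j t, ‖b j t‖ = 1)
    (e : ℝ → EuclideanSpace ℝ (Fin 3))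
    (he : ∀ t, e t = ∑ j, k j • cross3 (a j) (b j t))
    (hb : ∀ j t, HasDerivAt (b j) (cross3 (b j t) (ω t)) t)
    (hω : ∀ t, HasDerivAt ω (-(kω • ω t) - e t + h t) t)
    (V : ℝ → ℝ)
    (hV : ∀ t, V t = ∑ j, k j * (1 + inner ℝ (a j) (b j t) : ℝ)
        + 1 / 2 * ‖ω t‖ ^ 2 + kV * (inner ℝ (e t) (ω t) : ℝ)) :
    Differentiable ℝ V ∧
    ∀ t : ℝ, deriv V t ≤ -(kω - kV * ∑ j, k j) * ‖ω t‖ ^ 2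
        - kV * ‖e t‖ ^ 2 + kV * kω * ‖e t‖ * ‖ω t‖
        + (‖ω t‖ + kV * ‖e t‖) * ‖h t‖ := by
  have he' : ∀ t, HasDerivAt e (∑ j, k j • cross3 (a j) (cross3 (b j t) (ω t))) t := fun t => by
    rw [funext he]
    exact hasDerivAt_sum_smul_const_cross3 k a (hb · t)
  have hVd : ∀ t, HasDerivAt V (⟪e t, ω t⟫ + ⟪ω t, -(kω • ω t) - e t + h t⟫
      + kV * (⟪e t, -(kω • ω t) - e t + h t⟫
        + ⟪∑ j, k j • cross3 (a j) (cross3 (b j t) (ω t)), ω t⟫)) t := fun t => by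
    have hpot := hasDerivAt_sum_mul_one_add_inner k a (hb · t)
    have hkin := ((hω t).norm_sq).const_mul (1 / 2 : ℝ)
    have hcoupling := ((he' t).inner ℝ (hω t)).const_mul kV
    rw [funext hV]
    refine ((hpot.add hkin).add hcoupling).congr_deriv ?_
    rw [sum_mul_inner_cross3, ← he]
    ring
  refine ⟨fun t => (hVd t).differentiableAt, fun t => ?_⟩
  rw [(hVd t).deriv]
  exact inner_dissipation_le hkω.le hkV
    (inner_sum_cross3_cross3_le (fun j => (hk j).le) (fun j => (ha j).le)
      (fun j => (hbunit j t).le) _)
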